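/- Let (f_k)_{k∈ℕ} be a frame sequence in H with synthesis operator T. Then T has closed range, and if T† denotes the Moore-Penrose pseudoinverse of T, then ‖T†‖⁻¹‖Pf‖ ≤ ‖T*f‖ ≤ ‖T‖‖Pf‖ for every f ∈ H, and ‖T†‖⁻¹‖Qc‖ ≤ ‖Tc‖ ≤ ‖T‖‖Qc‖ for every c ∈ ℓ²(ℕ). -/

import Mathlib

/- Setting: `H` is a complex Hilbert space, `ℓ2` is the Hilbert space of square-summable
complex sequences with standard orthonormal basis `lp.single 2 k 1`. -/

noncomputable section

abbrev ℓ2 : Type := lp (fun _ : ℕ => ℂ) 2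

variable {H : Type} [NormedAddCommGroup H] [InnerProductSpace ℂ H] [CompleteSpace H]

/-- The closed linear span `V` of the set of values of the sequence `f`. -/
def spanClosure (f : ℕ → H) : Submodule ℂ H :=
  (Submodule.span ℂ (Set.range f)).topologicalClosure

instance (f : ℕ → H) : CompleteSpace (spanClosure f) :=
  Submodule.topologicalClosure.completeSpace _

/-- `f` is a frame sequence with frame bounds `A`, `B`:  the frame inequality
`A‖g‖² ≤ ∑ₖ |⟨g, fₖ⟩|² ≤ B‖g‖²` holds for every `g` in the closed linear span `V` of the `fₖ`.
(In Mathlib's convention, the paper's `⟨g, fₖ⟩`, linear in the first argument, is `⟪fₖ, g⟫`.) -/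
def IsFrameSeqWith (f : ℕ → H) (A B : ℝ) : Prop :=
  0 < A ∧ 0 < B ∧
    ∀ g ∈ spanClosure f,
      Summable (fun k => ‖(inner ℂ (f k) g : ℂ)‖ ^ 2) ∧
      A * ‖g‖ ^ 2 ≤ ∑' k, ‖(inner ℂ (f k) g : ℂ)‖ ^ 2 ∧
      (∑' k, ‖(inner ℂ (f k) g : ℂ)‖ ^ 2) ≤ B * ‖g‖ ^ 2

/-- The orthogonal projection `P` of `H` onto `V`, as an operator `H → H`. -/
def projV (f : ℕ → H) : H →L[ℂ] H :=
  (spanClosure f).subtypeL ∘L Submodule.orthogonalProjectionOnto (spanClosure f)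

/-- The orthogonal projection `Q` of `ℓ2` onto `(ker T)ᗮ`, as an operator `ℓ2 → ℓ2`. -/
def projQ (T : ℓ2 →L[ℂ] H) : ℓ2 →L[ℂ] ℓ2 :=
  (LinearMap.ker (T : ℓ2 →ₗ[ℂ] H))ᗮ.subtypeL ∘L
    Submodule.orthogonalProjectionOnto (LinearMap.ker (T : ℓ2 →ₗ[ℂ] H))ᗮ

/-- `Ad` is the Moore–Penrose pseudoinverse of the bounded operator `A`:
`A A† A = A`, `A† A A† = A†`, `(A A†)* = A A†` and `(A† A)* = A† A`. -/
def IsMoorePenrose {E F : Type} [NormedAddCommGroup E] [InnerProductSpace ℂ E] [CompleteSpace E]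
    [NormedAddCommGroup F] [InnerProductSpace ℂ F] [CompleteSpace F]
    (A : E →L[ℂ] F) (Ad : F →L[ℂ] E) : Prop :=
  A ∘L Ad ∘L A = A ∧ Ad ∘L A ∘L Ad = Ad ∧
  ContinuousLinearMap.adjoint (A ∘L Ad) = A ∘L Ad ∧
  ContinuousLinearMap.adjoint (Ad ∘L A) = Ad ∘L A

/-
The frame lower bound says `A‖v‖² ≤ ‖T* v‖²` on `V`, and `T` maps into `V`; so the compression of
`T T*` to `V` is coercive, hence invertible, and `range T = V` is closed. For a Moore–Penrose
inverse, `T T†` and `T† T` are self-adjoint idempotents, the first with range `range T = V`, the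
second with kernel `ker T`; so `P = T T†` and `Q = T† T`. The four inequalities then come from
`T T† = (T†)* T*`, `T* = T* T T†`, `Q c = T† (T c)` and `T c = T (Q c)`.
-/

open ContinuousLinearMap
open scoped InnerProductSpace

section StarProjection

variable {𝕜 E : Type*} [RCLike 𝕜] [NormedAddCommGroup E] [InnerProductSpace 𝕜 E]
  [CompleteSpace E] {p : E →L[𝕜] E}

theorem IsStarProjection.eq_starProjection_of_range_eq (hp : IsStarProjection p)
    {K : Submodule 𝕜 E} [K.HasOrthogonalProjection] (h : p.range = K) :
    p = K.starProjection := by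
  obtain ⟨_, hp'⟩ := isStarProjection_iff_eq_starProjection_range.mp hp
  subst h
  exact hp'

theorem IsStarProjection.eq_starProjection_of_ker_eq (hp : IsStarProjection p)
    {K : Submodule 𝕜 E} [Kᗮ.HasOrthogonalProjection] (h : p.ker = K) :
    p = Kᗮ.starProjection := by
  obtain ⟨_, hp'⟩ := isStarProjection_iff_eq_starProjection_range.mp hp
  refine hp.eq_starProjection_of_range_eq ?_
  rw [← h, hp', Submodule.range_starProjection, Submodule.ker_starProjection,
    Submodule.orthogonal_orthogonal]

end StarProjection

section MoorePenrose

variable {E F : Type} [NormedAddCommGroup E] [InnerProductSpace ℂ E] [CompleteSpace E]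
  [NormedAddCommGroup F] [InnerProductSpace ℂ F] [CompleteSpace F]
  {A : E →L[ℂ] F} {Ad : F →L[ℂ] E}

namespace IsMoorePenrose

theorem isStarProjection_self_comp (h : IsMoorePenrose A Ad) : IsStarProjection (A ∘L Ad) := by
  refine ⟨?_, h.2.2.1⟩
  change (A ∘L Ad) ∘L (A ∘L Ad) = A ∘L Ad
  rw [← comp_assoc, comp_assoc A, h.1]

theorem isStarProjection_comp_self (h : IsMoorePenrose A Ad) : IsStarProjection (Ad ∘L A) := by
  refine ⟨?_, h.2.2.2⟩
  change (Ad ∘L A) ∘L (Ad ∘L A) = Ad ∘L A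
  rw [← comp_assoc, comp_assoc Ad, h.2.1]

theorem range_self_comp (h : IsMoorePenrose A Ad) : (A ∘L Ad).range = A.range := by
  refine le_antisymm (LinearMap.range_comp_le_range _ _) ?_
  conv_lhs => rw [← h.1, ← comp_assoc]
  exact LinearMap.range_comp_le_range _ _

theorem ker_comp_self (h : IsMoorePenrose A Ad) : (Ad ∘L A).ker = A.ker := by
  refine le_antisymm ?_ (LinearMap.ker_le_ker_comp _ _)
  conv_rhs => rw [← h.1]
  exact LinearMap.ker_le_ker_comp _ _

theorem self_comp_eq_starProjection (h : IsMoorePenrose A Ad) {K : Submodule ℂ F}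
    [K.HasOrthogonalProjection] (hK : A.range = K) : A ∘L Ad = K.starProjection :=
  h.isStarProjection_self_comp.eq_starProjection_of_range_eq (h.range_self_comp.trans hK)

theorem comp_self_eq_starProjection_orthogonal_ker (h : IsMoorePenrose A Ad) :
    Ad ∘L A = A.kerᗮ.starProjection :=
  h.isStarProjection_comp_self.eq_starProjection_of_ker_eq h.ker_comp_self

theorem norm_apply_apply_le (h : IsMoorePenrose A Ad) (y : F) :
    ‖A (Ad y)‖ ≤ ‖Ad‖ * ‖adjoint A y‖ := by
  have : A (Ad y) = adjoint Ad (adjoint A y) := by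
    rw [← comp_apply A, ← h.2.2.1, adjoint_comp]; rfl
  rw [this, ← LinearIsometryEquiv.norm_map adjoint Ad]
  exact le_opNorm _ _

theorem norm_adjoint_apply_le (h : IsMoorePenrose A Ad) (y : F) :
    ‖adjoint A y‖ ≤ ‖A‖ * ‖A (Ad y)‖ := by
  have : adjoint A ∘L (A ∘L Ad) = adjoint A := by
    rw [← h.2.2.1, ← adjoint_comp, comp_assoc, h.1]
  rw [← this, comp_apply, ← LinearIsometryEquiv.norm_map adjoint A]
  exact le_opNorm _ _

theorem norm_apply_le (h : IsMoorePenrose A Ad) (x : E) : ‖A x‖ ≤ ‖A‖ * ‖Ad (A x)‖ := by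
  calc ‖A x‖ = ‖A (Ad (A x))‖ := congrArg norm (DFunLike.congr_fun h.1 x).symm
    _ ≤ ‖A‖ * ‖Ad (A x)‖ := le_opNorm _ _

end IsMoorePenrose

end MoorePenrose

theorem ContinuousLinearMap.range_eq_of_range_le_of_le_norm_adjoint {𝕜 E F : Type*} [RCLike 𝕜]
    [NormedAddCommGroup E] [InnerProductSpace 𝕜 E] [CompleteSpace E]
    [NormedAddCommGroup F] [InnerProductSpace 𝕜 F] [CompleteSpace F]
    {T : E →L[𝕜] F} {V : Submodule 𝕜 F} [CompleteSpace V] (hTV : T.range ≤ V)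
    {c : ℝ} (hc : 0 < c) (hbound : ∀ v ∈ V, c * ‖v‖ ^ 2 ≤ ‖adjoint T v‖ ^ 2) :
    T.range = V := by
  let S : V →L[𝕜] V := V.orthogonalProjectionOnto ∘L T ∘L adjoint T ∘L V.subtypeL
  have hS : ∀ v : V, (S v : F) = T (adjoint T v) := fun v =>
    Submodule.starProjection_eq_self_iff.mpr (hTV ⟨_, rfl⟩)
  have hSunit : IsUnit S := by
    refine isUnit_of_forall_le_norm_inner_map S (c := ⟨c, hc.le⟩) hc fun v => ?_
    have : ⟪S v, v⟫_𝕜 = (‖adjoint T v‖ ^ 2 : ℝ) := by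
      rw [Submodule.coe_inner, hS, ← adjoint_inner_right, inner_self_eq_norm_sq_to_K,
        RCLike.ofReal_pow]
    rw [this, RCLike.norm_ofReal, abs_of_nonneg (by positivity), mul_comm]
    exact hbound v v.2
  refine le_antisymm hTV fun w hw => ?_
  obtain ⟨v, hv⟩ := (isUnit_iff_bijective.mp hSunit).2 ⟨w, hw⟩
  exact ⟨adjoint T v, (hS v).symm.trans (congrArg Subtype.val hv)⟩

theorem lp.norm_sq_eq_tsum {ι : Type*} {G : ι → Type*} [∀ i, NormedAddCommGroup (G i)]
    (x : lp G 2) : ‖x‖ ^ 2 = ∑' i, ‖x i‖ ^ 2 := by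
  simpa using lp.norm_rpow_eq_tsum (p := 2) (by norm_num) x

section Synthesis

variable {f : ℕ → H} {T : ℓ2 →L[ℂ] H}

omit [CompleteSpace H] in
theorem synthesis_single (hT : ∀ c : ℓ2, HasSum (fun k => c k • f k) (T c)) (k : ℕ) :
    T (lp.single 2 k 1) = f k := by
  refine (hT _).unique ?_
  convert hasSum_ite_eq k (f k) using 2 with j
  by_cases h : j = k <;> simp [lp.single_apply, h]

theorem adjoint_synthesis_apply (hT : ∀ c : ℓ2, HasSum (fun k => c k • f k) (T c))
    (g : H) (k : ℕ) : adjoint T g k = ⟪f k, g⟫_ℂ := by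
  rw [← synthesis_single hT, ← adjoint_inner_right, lp.inner_single_left, RCLike.inner_apply,
    map_one, mul_one]

theorem norm_adjoint_synthesis_sq (hT : ∀ c : ℓ2, HasSum (fun k => c k • f k) (T c)) (g : H) :
    ‖adjoint T g‖ ^ 2 = ∑' k, ‖⟪f k, g⟫_ℂ‖ ^ 2 := by
  simp only [lp.norm_sq_eq_tsum, adjoint_synthesis_apply hT]

omit [CompleteSpace H] in
theorem synthesis_mem_spanClosure (hT : ∀ c : ℓ2, HasSum (fun k => c k • f k) (T c))
    (c : ℓ2) : T c ∈ spanClosure f :=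
  (Submodule.isClosed_topologicalClosure _).mem_of_tendsto (hT c) <| .of_forall fun _ =>
    Submodule.sum_mem _ fun k _ => Submodule.smul_mem _ _ <|
      Submodule.le_topologicalClosure _ (Submodule.subset_span ⟨k, rfl⟩)

theorem IsFrameSeqWith.range_synthesis {A B : ℝ} (hF : IsFrameSeqWith f A B)
    (hT : ∀ c : ℓ2, HasSum (fun k => c k • f k) (T c)) : T.range = spanClosure f := by
  refine T.range_eq_of_range_le_of_le_norm_adjoint ?_ hF.1 fun v hv => ?_
  · rintro _ ⟨c, rfl⟩
    exact synthesis_mem_spanClosure hT c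
  · rw [norm_adjoint_synthesis_sq hT]
    exact (hF.2.2 v hv).2.1

end Synthesis

/-- for a frame sequence, the synthesis operator `T` has closed range and,
`T†` being the Moore-Penrose pseudoinverse of `T`,
`‖T†‖⁻¹‖Pg‖ ≤ ‖T*g‖ ≤ ‖T‖‖Pg‖` for all `g ∈ H` and
`‖T†‖⁻¹‖Qc‖ ≤ ‖Tc‖ ≤ ‖T‖‖Qc‖` for all `c ∈ ℓ²`. -/
theorem stmt7 (f : ℕ → H) (A B : ℝ) (hF : IsFrameSeqWith f A B)
    (T : ℓ2 →L[ℂ] H) (hT : ∀ c : ℓ2, HasSum (fun k => c k • f k) (T c)) :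
    IsClosed (Set.range T) ∧
      ∀ Tdag : H →L[ℂ] ℓ2, IsMoorePenrose T Tdag →
        (∀ g : H,
            ‖Tdag‖⁻¹ * ‖projV f g‖ ≤ ‖ContinuousLinearMap.adjoint T g‖ ∧
            ‖ContinuousLinearMap.adjoint T g‖ ≤ ‖T‖ * ‖projV f g‖) ∧
        (∀ c : ℓ2, ‖Tdag‖⁻¹ * ‖projQ T c‖ ≤ ‖T c‖ ∧ ‖T c‖ ≤ ‖T‖ * ‖projQ T c‖) := by
  have hrange : T.range = spanClosure f := hF.range_synthesis hT
  refine ⟨?_, fun Tdag hMP => ⟨fun g => ?_, fun c => ?_⟩⟩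
  · change IsClosed (T.range : Set H)
    rw [hrange]
    exact Submodule.isClosed_topologicalClosure _
  · have hP : projV f g = T (Tdag g) :=
      DFunLike.congr_fun (hMP.self_comp_eq_starProjection hrange).symm g
    rw [hP]
    exact ⟨inv_mul_le_of_le_mul₀ (norm_nonneg _) (norm_nonneg _) (hMP.norm_apply_apply_le g),
      hMP.norm_adjoint_apply_le g⟩
  · have hQ : projQ T c = Tdag (T c) :=
      DFunLike.congr_fun hMP.comp_self_eq_starProjection_orthogonal_ker.symm c
    rw [hQ]
    exact ⟨inv_mul_le_of_le_mul₀ (norm_nonneg _) (norm_nonneg _) (le_opNorm _ _),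
      hMP.norm_apply_le c⟩
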